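/- Let A be a countable simple von Neumann regular ring which is not semisimple, and let Q be an injective right A-module. Then the functor Hom_A(Q, ?) : Mod-A → Ab preserves small coproducts. -/

import Mathlib

/-!
Right `A`-modules are left `Aᵐᵒᵖ`-modules, and `Aᵐᵒᵖ` is again simple, von Neumann regular and
not semisimple, so we work with left modules over such a ring `R`. Only surjectivity is at stake:
a map `g : Q → ⨁ᵢ Mᵢ` has to have only finitely many nonzero components `gᵢ`.

Every finitely generated left ideal of a von Neumann regular ring is generated by an idempotent,
hence is a direct summand; so if `R` is not semisimple it has a left ideal `L` that is not finitely
generated. Splitting off a nonzero idempotent of `L` again and again produces an infinite sequence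
of nonzero orthogonal idempotents `eₙ`. If infinitely many components `gᵢₙ` were nonzero,
simplicity of `R` gives `yₙ` with `gᵢₙ (eₙ • yₙ) ≠ 0`, and injectivity of `Q`, applied to the left
ideal `⨁ₙ R eₙ`, gives a single `q` with `eₙ • q = eₙ • yₙ` for all `n`. Then `gᵢₙ q ≠ 0` for every
`n`, which is impossible since `g q` lies in the direct sum.
-/

open DirectSum

/-- The canonical map `⨁ᵢ Hom_A(Q, Mᵢ) → Hom_A(Q, ⨁ᵢ Mᵢ)`. -/
noncomputable def homCoprodMap (R : Type) [Ring R] (Q : Type) [AddCommGroup Q] [Module R Q]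
    (ι : Type) (M : ι → Type) [∀ i, AddCommGroup (M i)] [∀ i, Module R (M i)] :
    DirectSum ι (fun i => Q →ₗ[R] M i) →+ (Q →ₗ[R] DirectSum ι M) :=
  letI := Classical.decEq ι
  DirectSum.toAddMonoid (fun i => AddMonoidHom.mk'
    (fun f => (DirectSum.lof R ι M i).comp f) (fun f g => by ext q; simp))

universe u v

section Idempotents

open Ideal

variable {R : Type*} [Ring R] {e x : R}

theorem IsIdempotentElem.mem_span_singleton_iff (he : IsIdempotentElem e) :
    x ∈ span {e} ↔ x * e = x := by
  refine ⟨fun hx => ?_, fun hx => mem_span_singleton'.2 ⟨x, hx⟩⟩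
  obtain ⟨a, rfl⟩ := mem_span_singleton'.1 hx
  rw [mul_assoc, he.eq]

theorem IsIdempotentElem.isCompl_span_singleton_one_sub (he : IsIdempotentElem e) :
    IsCompl (span {e}) (span {1 - e}) := by
  refine ⟨Submodule.disjoint_def.2 fun x hx hx' => ?_,
    codisjoint_iff.2 <| eq_top_iff.2 fun x _ => ?_⟩
  · rw [he.mem_span_singleton_iff] at hx
    rw [he.one_sub.mem_span_singleton_iff, mul_sub, mul_one, hx, sub_self] at hx'
    exact hx'.symm
  · rw [show x = x * e + x * (1 - e) by noncomm_ring]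
    exact Submodule.add_mem_sup (mem_span_singleton'.2 ⟨x, rfl⟩) (mem_span_singleton'.2 ⟨x, rfl⟩)

theorem orthogonalIdempotents_sub_succ {u : ℕ → R} (hu : ∀ n, IsIdempotentElem (u n))
    (hsucc : ∀ n, u n * u (n + 1) = u (n + 1) ∧ u (n + 1) * u n = u (n + 1)) :
    OrthogonalIdempotents fun n => u n - u (n + 1) := by
  have hle (m n : ℕ) (hmn : m ≤ n) : u m * u n = u n ∧ u n * u m = u n := by
    induction n, hmn using Nat.le_induction with
    | base => exact ⟨(hu m).eq, (hu m).eq⟩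
    | succ n _ ih =>
      exact ⟨by rw [← (hsucc n).1, ← mul_assoc, ih.1], by rw [← (hsucc n).2, mul_assoc, ih.2]⟩
  refine ⟨fun n => ?_, fun m n hmn => ?_⟩
  · simp only [IsIdempotentElem, sub_mul, mul_sub, (hu _).eq, (hsucc n).1, (hsucc n).2]
    abel
  · rcases Nat.lt_or_gt_of_ne hmn with h | h
    · simp only [sub_mul, mul_sub, (hle m n h.le).1, (hle m (n + 1) (by omega)).1,
        (hle (m + 1) n h).1, (hle (m + 1) (n + 1) (by omega)).1]
      abel
    · simp only [sub_mul, mul_sub, (hle n m h.le).2, (hle n (m + 1) (by omega)).2,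
        (hle (n + 1) m h).2, (hle (n + 1) (m + 1) (by omega)).2]
      abel

end Idempotents

def IsVonNeumannRegular (R : Type*) [Ring R] : Prop :=
  ∀ a : R, ∃ x, a * x * a = a

namespace IsVonNeumannRegular

open Ideal

variable {R : Type*} [Ring R]

theorem op (hR : IsVonNeumannRegular R) : IsVonNeumannRegular Rᵐᵒᵖ := fun a => by
  obtain ⟨x, hx⟩ := hR a.unop
  exact ⟨MulOpposite.op x, by simpa [mul_assoc] using congrArg MulOpposite.op hx⟩

theorem exists_isIdempotentElem_span_sup_eq (hR : IsVonNeumannRegular R) (e f : R)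
    (he : IsIdempotentElem e) : ∃ g, IsIdempotentElem g ∧ span {e} ⊔ span {f} = span {g} := by
  obtain ⟨y, hy⟩ := hR (f - f * e)
  obtain ⟨f', hf'_def⟩ : ∃ f', f' = y * (f - f * e) := ⟨_, rfl⟩
  have hf' : IsIdempotentElem f' := by
    rw [IsIdempotentElem, hf'_def, mul_assoc, ← mul_assoc _ y, hy]
  have hf'e : f' * e = 0 := by
    rw [hf'_def, mul_assoc, sub_mul, mul_assoc, he.eq, sub_self, mul_zero]
  obtain ⟨g, hg_def⟩ : ∃ g, g = e + f' - e * f' := ⟨_, rfl⟩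
  have heg : e * g = e := by simp only [hg_def, mul_add, mul_sub, ← mul_assoc, he.eq]; abel
  have hf'g : f' * g = f' := by
    simp only [hg_def, mul_add, mul_sub, ← mul_assoc, hf'e, hf'.eq, zero_mul]; abel
  have hg : IsIdempotentElem g := by
    rw [IsIdempotentElem]
    nth_rewrite 1 [hg_def]
    rw [sub_mul, add_mul, mul_assoc, heg, hf'g, hg_def]
  have he_le : span {e} ≤ span {g} :=
    (span_singleton_le_iff_mem _).2 (hg.mem_span_singleton_iff.2 heg)
  have hf'_le : span {f'} ≤ span {g} :=
    (span_singleton_le_iff_mem _).2 (hg.mem_span_singleton_iff.2 hf'g)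
  have hf : f ∈ span {f'} ⊔ span {e} := by
    rw [show f = (f - f * e) * f' + f * e by rw [hf'_def, ← mul_assoc, hy, sub_add_cancel]]
    exact Submodule.add_mem_sup (mem_span_singleton'.2 ⟨_, rfl⟩) (mem_span_singleton'.2 ⟨_, rfl⟩)
  have hf'_mem : f' ∈ span {e} ⊔ span {f} := by
    rw [hf'_def]
    exact mul_mem_left _ y <| sub_mem (Submodule.mem_sup_right (mem_span_singleton_self f))
      (Submodule.mem_sup_left (mem_span_singleton'.2 ⟨f, rfl⟩))
  refine ⟨g, hg, le_antisymm (sup_le he_le ?_) ?_⟩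
  · exact (span_singleton_le_iff_mem _).2 (sup_le hf'_le he_le hf)
  · rw [span_singleton_le_iff_mem, hg_def]
    exact sub_mem (add_mem (Submodule.mem_sup_left (mem_span_singleton_self e)) hf'_mem)
      (mul_mem_left _ e hf'_mem)

theorem exists_isIdempotentElem_eq_span_of_fg (hR : IsVonNeumannRegular R) {L : Ideal R}
    (hL : L.FG) : ∃ e, IsIdempotentElem e ∧ L = span {e} := by
  induction L, hL using Submodule.fg_induction with
  | singleton a =>
    obtain ⟨x, hx⟩ := hR a
    refine ⟨x * a, by rw [IsIdempotentElem, mul_assoc, ← mul_assoc a, hx], le_antisymm ?_ ?_⟩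
    · exact (span_singleton_le_iff_mem _).2 (mem_span_singleton'.2 ⟨a, by rw [← mul_assoc, hx]⟩)
    · exact (span_singleton_le_iff_mem _).2 (mem_span_singleton'.2 ⟨x, rfl⟩)
  | sup _ _ _ _ h₁ h₂ =>
    obtain ⟨e, he, rfl⟩ := h₁
    obtain ⟨f, -, rfl⟩ := h₂
    exact hR.exists_isIdempotentElem_span_sup_eq e f he

theorem exists_not_fg_of_not_isSemisimpleRing (hR : IsVonNeumannRegular R)
    (h : ¬ IsSemisimpleRing R) : ∃ L : Ideal R, ¬ L.FG := by
  by_contra! hfg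
  refine h { exists_isCompl := fun L => ?_ }
  obtain ⟨e, he, rfl⟩ := hR.exists_isIdempotentElem_eq_span_of_fg (hfg L)
  exact ⟨_, he.isCompl_span_singleton_one_sub⟩

/-- Here `v = u - e` with `e = u x a` for some `0 ≠ a ∈ L` and `a x a = a`; since
`L = R e ⊕ (L ⊓ R v)`, the second summand is not finitely generated either. -/
theorem exists_isIdempotentElem_lt_of_not_fg (hR : IsVonNeumannRegular R) {u : R}
    (hu : IsIdempotentElem u) {L : Ideal R} (hLu : L ≤ span {u}) (hL : ¬ L.FG) :
    ∃ v, IsIdempotentElem v ∧ u * v = v ∧ v * u = v ∧ v ≠ u ∧ ¬ (L ⊓ span {v}).FG := by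
  obtain ⟨a, haL, ha⟩ :=
    Submodule.exists_mem_ne_zero_of_ne_bot (p := L) (by rintro rfl; exact hL Submodule.fg_bot)
  obtain ⟨x, hx⟩ := hR a
  have hf : IsIdempotentElem (x * a) := by rw [IsIdempotentElem, mul_assoc, ← mul_assoc a, hx]
  have hfu : x * a * u = x * a := hu.mem_span_singleton_iff.1 (hLu (L.mul_mem_left x haL))
  obtain ⟨e, he_def⟩ : ∃ e, e = u * (x * a) := ⟨_, rfl⟩
  have hue : u * e = e := by rw [he_def, ← mul_assoc, hu.eq]
  have heu : e * u = e := by rw [he_def, mul_assoc, hfu]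
  have he0 : e ≠ 0 := by
    have hfe : x * a * e = x * a := by rw [he_def, ← mul_assoc, hfu, hf.eq]
    rintro rfl
    rw [← hx, mul_assoc, ← hfe, mul_zero, mul_zero] at ha
    exact ha rfl
  have he : IsIdempotentElem e := by
    rw [IsIdempotentElem, he_def, mul_assoc, ← mul_assoc _ u, hfu, hf.eq]
  have heL : e ∈ L := he_def ▸ L.mul_mem_left u (L.mul_mem_left x haL)
  have hv : IsIdempotentElem (u - e) := by
    simp only [IsIdempotentElem, sub_mul, mul_sub, hu.eq, hue, heu, he.eq]; abel
  refine ⟨u - e, hv, by rw [mul_sub, hu.eq, hue], by rw [sub_mul, hu.eq, heu],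
    fun h => he0 (sub_eq_self.1 h), fun hfg => hL ?_⟩
  suffices L = span {e} ⊔ (L ⊓ span {u - e}) from this ▸ (Submodule.fg_span_singleton e).sup hfg
  refine le_antisymm (fun y hy => ?_) (sup_le ((span_singleton_le_iff_mem _).2 heL) inf_le_left)
  have hyu : y * u = y := hu.mem_span_singleton_iff.1 (hLu hy)
  rw [show y = y * e + y * (u - e) by rw [mul_sub, hyu]; abel]
  refine Submodule.add_mem_sup (mem_span_singleton'.2 ⟨y, rfl⟩)
    ⟨?_, mem_span_singleton'.2 ⟨y, rfl⟩⟩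
  rw [mul_sub, hyu]
  exact sub_mem hy (L.mul_mem_left y heL)

theorem exists_orthogonalIdempotents_of_not_isSemisimpleRing (hR : IsVonNeumannRegular R)
    (h : ¬ IsSemisimpleRing R) : ∃ e : ℕ → R, OrthogonalIdempotents e ∧ ∀ n, e n ≠ 0 := by
  obtain ⟨L, hL⟩ := hR.exists_not_fg_of_not_isSemisimpleRing h
  let S := {p : R × Ideal R // IsIdempotentElem p.1 ∧ p.2 ≤ span {p.1} ∧ ¬ p.2.FG}
  have step (p : S) : ∃ q : S, p.1.1 * q.1.1 = q.1.1 ∧ q.1.1 * p.1.1 = q.1.1 ∧ q.1.1 ≠ p.1.1 := by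
    obtain ⟨v, hv, huv, hvu, hne, hfg⟩ :=
      hR.exists_isIdempotentElem_lt_of_not_fg p.2.1 p.2.2.1 p.2.2.2
    exact ⟨⟨(v, p.1.2 ⊓ span {v}), hv, inf_le_right, hfg⟩, huv, hvu, hne⟩
  choose next hnext using step
  let start : S := ⟨(1, L), .one, fun x _ => mem_span_singleton'.2 ⟨x, mul_one x⟩, hL⟩
  let u (n : ℕ) : R := (next^[n] start).1.1
  have hsucc (n : ℕ) :
      u n * u (n + 1) = u (n + 1) ∧ u (n + 1) * u n = u (n + 1) ∧ u (n + 1) ≠ u n := by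
    simp only [u, Function.iterate_succ_apply']
    exact hnext _
  exact ⟨fun n => u n - u (n + 1),
    orthogonalIdempotents_sub_succ (fun n => (next^[n] start).2.1)
      fun n => ⟨(hsucc n).1, (hsucc n).2.1⟩,
    fun n => sub_ne_zero.2 (hsucc n).2.2.symm⟩

end IsVonNeumannRegular

section SimpleRing

variable {R M N : Type*} [Ring R] [IsSimpleRing R] [AddCommGroup M] [Module R M]
  [AddCommGroup N] [Module R N]

theorem IsSimpleRing.annihilator_eq_bot {P : Submodule R M} (hP : P ≠ ⊥) : P.annihilator = ⊥ :=
  ((isSimpleRing_iff_isTwoSided_imp.1 ‹_›).2 _ inferInstance).resolve_right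
    (Submodule.annihilator_eq_top_iff.not.2 hP)

theorem IsSimpleRing.exists_apply_smul_ne_zero {f : M →ₗ[R] N} (hf : f ≠ 0) {r : R} (hr : r ≠ 0) :
    ∃ m, f (r • m) ≠ 0 := by
  have hr' : r ∉ (LinearMap.range f).annihilator := by
    rwa [annihilator_eq_bot (LinearMap.range_eq_bot.not.2 hf)]
  simp only [Submodule.mem_annihilator, LinearMap.mem_range, not_forall] at hr'
  obtain ⟨_, ⟨m, rfl⟩, hm⟩ := hr'
  exact ⟨m, by rwa [map_smul]⟩

end SimpleRing

namespace Module.Injective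

variable {R : Type u} [Ring R] {Q : Type v} [AddCommGroup Q] [Module R Q] [Small.{v} R]
  [Module.Injective R Q]

theorem exists_comp_eq_of_ker_le {P P' : Type*} [AddCommGroup P] [Module R P] [AddCommGroup P']
    [Module R P'] (f : P →ₗ[R] P') (g : P →ₗ[R] Q) (hfg : LinearMap.ker f ≤ LinearMap.ker g) :
    ∃ h : P' →ₗ[R] Q, h ∘ₗ f = g := by
  obtain ⟨h, hh⟩ := Module.Injective.extension_property R Q _ P' ((LinearMap.ker f).liftQ f le_rfl)
    (LinearMap.ker_eq_bot.1 (Submodule.ker_liftQ_eq_bot _ _ _ le_rfl))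
    ((LinearMap.ker f).liftQ g hfg)
  exact ⟨h, LinearMap.ext fun x => congr($hh (Submodule.Quotient.mk x))⟩

theorem exists_smul_eq_smul {ι : Type*} {e : ι → R} (he : OrthogonalIdempotents e) (y : ι → Q) :
    ∃ q : Q, ∀ i, e i • q = e i • y i := by
  classical
  obtain ⟨h, hh⟩ := exists_comp_eq_of_ker_le (Finsupp.linearCombination R e)
    (Finsupp.linearCombination R fun i => e i • y i) fun c hc => by
      have hce (i : ι) : c i * e i = 0 := by
        by_cases hci : c i = 0
        · rw [hci, zero_mul]
        · simpa [Finsupp.linearCombination_apply, Finsupp.sum, Finset.sum_mul, mul_assoc,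
            he.mul_eq, hci] using congr($hc * e i)
      simp [Finsupp.linearCombination_apply, Finsupp.sum, smul_smul, hce]
  refine ⟨h 1, fun i => ?_⟩
  simpa [← map_smul] using congr($hh (Finsupp.single i 1))

theorem exists_forall_apply_ne_zero [IsSimpleRing R] {ι : Type*} {e : ι → R}
    (he : OrthogonalIdempotents e) (he0 : ∀ i, e i ≠ 0) {N : ι → Type*}
    [∀ i, AddCommGroup (N i)] [∀ i, Module R (N i)] {f : ∀ i, Q →ₗ[R] N i} (hf : ∀ i, f i ≠ 0) :
    ∃ q, ∀ i, f i q ≠ 0 := by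
  choose y hy using fun i => IsSimpleRing.exists_apply_smul_ne_zero (hf i) (he0 i)
  obtain ⟨q, hq⟩ := exists_smul_eq_smul he y
  refine ⟨q, fun i hi => hy i ?_⟩
  rw [← hq, map_smul, hi, smul_zero]

end Module.Injective

theorem IsVonNeumannRegular.finite_setOf_component_comp_ne_zero {R : Type u} {Q : Type v}
    {ι : Type*} [Ring R] [IsSimpleRing R] (hR : IsVonNeumannRegular R)
    (hss : ¬ IsSemisimpleRing R) [AddCommGroup Q] [Module R Q] [Small.{v} R]
    [Module.Injective R Q] (M : ι → Type*) [∀ i, AddCommGroup (M i)] [∀ i, Module R (M i)]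
    (g : Q →ₗ[R] ⨁ i, M i) : {i | component R ι M i ∘ₗ g ≠ 0}.Finite := by
  by_contra hinf
  obtain ⟨e, he, he0⟩ := hR.exists_orthogonalIdempotents_of_not_isSemisimpleRing hss
  let j := Set.Infinite.natEmbedding _ hinf
  obtain ⟨q, hq⟩ := Module.Injective.exists_forall_apply_ne_zero he he0
    (f := fun n => component R ι M (j n) ∘ₗ g) fun n => (j n).2
  exact Set.infinite_of_injective_forall_mem (Subtype.val_injective.comp j.injective)
    (s := {i | g q i ≠ 0}) hq (DFinsupp.finite_support (g q))

section homCoprodMap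

variable {R Q ι : Type} [Ring R] [AddCommGroup Q] [Module R Q] {M : ι → Type}
  [∀ i, AddCommGroup (M i)] [∀ i, Module R (M i)]

theorem homCoprodMap_of [inst : DecidableEq ι] (i : ι) (f : Q →ₗ[R] M i) :
    homCoprodMap R Q ι M (of _ i f) = lof R ι M i ∘ₗ f := by
  obtain rfl : inst = Classical.decEq ι := Subsingleton.elim _ _
  let := Classical.decEq ι
  exact toAddMonoid_of (β := fun i => Q →ₗ[R] M i) _ i f

theorem component_comp_homCoprodMap (x : ⨁ i, Q →ₗ[R] M i) (j : ι) :
    component R ι M j ∘ₗ homCoprodMap R Q ι M x = x j := by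
  classical
  induction x using DirectSum.induction_on with
  | zero => simp
  | of i f =>
    ext q
    rw [homCoprodMap_of]
    by_cases h : i = j
    · subst h; simp
    · simp [h, component.of, of_eq_of_ne (β := fun i => Q →ₗ[R] M i) i j f (Ne.symm h)]
  | add x y hx hy => rw [map_add, LinearMap.comp_add, hx, hy, DirectSum.add_apply]

theorem homCoprodMap_injective : Function.Injective (homCoprodMap R Q ι M) := fun x y hxy =>
  DFinsupp.ext fun j => by rw [← component_comp_homCoprodMap, hxy, component_comp_homCoprodMap]

theorem exists_homCoprodMap_eq (g : Q →ₗ[R] ⨁ i, M i)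
    (hg : {i | component R ι M i ∘ₗ g ≠ 0}.Finite) : ∃ x, homCoprodMap R Q ι M x = g := by
  classical
  refine ⟨∑ i ∈ hg.toFinset, of _ i (component R ι M i ∘ₗ g), ?_⟩
  ext q j : 2
  change component R ι M j _ = component R ι M j _
  rw [← LinearMap.comp_apply, component_comp_homCoprodMap, ← LinearMap.comp_apply,
    DFinsupp.finsetSum_apply]
  by_cases hj : j ∈ hg.toFinset
  · rw [Finset.sum_eq_single_of_mem j hj fun i _ hij => of_eq_of_ne _ _ _ hij.symm, of_eq_same]
  · rw [Finset.sum_eq_zero fun i hi => of_eq_of_ne (β := fun i => Q →ₗ[R] M i) i j _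
      (ne_of_mem_of_not_mem hi hj).symm, show component R ι M j ∘ₗ g = 0 by simpa using hj]

theorem IsVonNeumannRegular.homCoprodMap_bijective [IsSimpleRing R] (hR : IsVonNeumannRegular R)
    (hss : ¬ IsSemisimpleRing R) [Module.Injective R Q] :
    Function.Bijective (homCoprodMap R Q ι M) :=
  ⟨homCoprodMap_injective, fun g =>
    exists_homCoprodMap_eq g (hR.finite_setOf_component_comp_ne_zero hss M g)⟩

end homCoprodMap

theorem stmt8_general (A : Type) [Ring A] [IsSimpleRing A]
    (hvnr : ∀ a : A, ∃ x : A, a * x * a = a) (hnss : ¬ IsSemisimpleRing A)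
    (Q : Type) [AddCommGroup Q] [Module Aᵐᵒᵖ Q] (hQ : Module.Injective Aᵐᵒᵖ Q)
    (ι : Type) (M : ι → Type) [∀ i, AddCommGroup (M i)] [∀ i, Module Aᵐᵒᵖ (M i)] :
    Function.Bijective (homCoprodMap Aᵐᵒᵖ Q ι M) := by
  have := hQ
  exact IsVonNeumannRegular.op hvnr |>.homCoprodMap_bijective
    (isSemisimpleRing_mulOpposite_iff.not.2 hnss)

/-- **Hom out of an injective module over a countable simple von Neumann regular
non-semisimple ring preserves coproducts.**
Let `A` be a countable simple von Neumann regular ring which is not semisimple and `Q` an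
injective right `A`-module (right modules = `Aᵐᵒᵖ`-modules).  Then for every family
`(Mᵢ)` of right `A`-modules the canonical map `⨁ᵢ Hom_A(Q, Mᵢ) → Hom_A(Q, ⨁ᵢ Mᵢ)`
is bijective. -/
theorem stmt8 (A : Type) [Ring A] [Countable A] [IsSimpleRing A]
    (hvnr : ∀ a : A, ∃ x : A, a * x * a = a) (hnss : ¬ IsSemisimpleRing A)
    (Q : Type) [AddCommGroup Q] [Module Aᵐᵒᵖ Q] (hQ : Module.Injective Aᵐᵒᵖ Q)
    (ι : Type) (M : ι → Type) [∀ i, AddCommGroup (M i)] [∀ i, Module Aᵐᵒᵖ (M i)] :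
    Function.Bijective (homCoprodMap Aᵐᵒᵖ Q ι M) :=
  stmt8_general A hvnr hnss Q hQ ι M
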